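/- Let 0<q<1 and let α, β be real numbers with 2α≤1≤β. Then for every x>0, the second derivative of log f_{α,β}(·;q) at x equals ψ_q'(x+β) + (β−α)(log q)² q^x/(1−q^x)² + (log q) q^x/(1−q^x), and this equals the sum of the convergent series Σ_{k=1}^{∞} (log q)·q^{kx}/(1−q^k) · Φ_{α,β}(q^k), where Φ_{α,β}(y) = y^β log y + (β−α)(1−y) log y + (1−y). -/

import Mathlib

/-- The `q`-gamma function for `0 < q < 1`:
`Γ_q(x) = (1−q)^(1−x) ∏_{j=0}^∞ (1−q^(j+1))/(1−q^(j+x))`. -/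
noncomputable def qGamma (q x : ℝ) : ℝ :=
  (1 - q) ^ (1 - x) * ∏' j : ℕ, (1 - q ^ (j + 1)) / (1 - q ^ ((j : ℝ) + x))

/-- The `q`-digamma function for `0 < q < 1`:
`ψ_q(x) = −log(1−q) + log q · Σ_{k=1}^∞ q^{kx}/(1−q^k)`. -/
noncomputable def qDigamma (q x : ℝ) : ℝ :=
  -Real.log (1 - q) + Real.log q * ∑' k : ℕ, q ^ (((k : ℝ) + 1) * x) / (1 - q ^ (k + 1))

/-- The dilogarithm `Li₂(z) = −∫₀^z log(1−t)/t dt`. -/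
noncomputable def dilog (z : ℝ) : ℝ := -∫ t in (0:ℝ)..z, Real.log (1 - t) / t

/-- The function `f_{α,β}(x;q) = Γ_q(x+β)·exp(−Li₂(1−q^x)/log q) / ((1−q^x)/(1−q))^(x+β−α)`. -/
noncomputable def qf (α β q x : ℝ) : ℝ :=
  qGamma q (x + β) * Real.exp (-dilog (1 - q ^ x) / Real.log q) /
    ((1 - q ^ x) / (1 - q)) ^ (x + β - α)

/-- The auxiliary function `Φ_{α,β}(y) = y^β log y + (β−α)(1−y) log y + (1−y)`. -/
noncomputable def Phi (α β y : ℝ) : ℝ :=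
  y ^ β * Real.log y + (β - α) * (1 - y) * Real.log y + (1 - y)

/-!
Writing `Γ_q(x)` as `(1-q)^(1-x)` times the exponential of the convergent series
`∑ j, (log (1 - q^(j+1)) - log (1 - q^(j+x)))` and differentiating termwise gives `ψ_q`, once
the double series `∑ j, ∑ k, q^((j+x)(k+1))` is summed in the other order. By the fundamental
theorem of calculus the dilogarithm factor contributes `-x q^x log q / (1 - q^x)`, so
`(log f)'(x) = ψ_q(x+β) - log ((1-q^x)/(1-q)) + (β-α) log q · q^x/(1-q^x)`, and one more
differentiation gives the closed form. Expanding `q^x/(1-q^x)` and `q^x/(1-q^x)^2` as geometric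
series and `ψ_q'` as its Lambert series, the three series combine termwise into
`∑ k, log q · q^(kx)/(1-q^k) · Φ(q^k)`.
-/
open Real Set MeasureTheory

lemma hasSum_pow_succ_of_abs_lt_one {r : ℝ} (hr : |r| < 1) :
    HasSum (fun k : ℕ => r ^ (k + 1)) (r / (1 - r)) := by
  simpa only [pow_succ', div_eq_mul_inv] using (hasSum_geometric_of_abs_lt_one hr).mul_left r

lemma hasSum_succ_mul_pow_succ_of_abs_lt_one {r : ℝ} (hr : |r| < 1) :
    HasSum (fun k : ℕ => ((k : ℝ) + 1) * r ^ (k + 1)) (r / (1 - r) ^ 2) := by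
  have h := (hasSum_nat_add_iff' 1).2 (hasSum_coe_mul_geometric_of_norm_lt_one (𝕜 := ℝ) hr)
  simpa using h

lemma hasDerivAt_dilog {z : ℝ} (hz0 : z ≠ 0) (hz1 : z < 1) :
    HasDerivAt dilog (-(log (1 - z) / z)) z := by
  -- `log (1 - t) / t` has a removable singularity at `0`; `φ` is its continuous extension
  set φ := dslope (fun s : ℝ => log (1 - s)) 0
  have hφ : ∀ s ≠ 0, φ s = log (1 - s) / s := fun s hs => by
    simp [φ, dslope_of_ne _ hs, slope_def_field]
  have hdilog : dilog = fun u => -∫ t in (0 : ℝ)..u, φ t := by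
    funext u
    refine congrArg Neg.neg (intervalIntegral.integral_congr_ae ?_)
    filter_upwards [Measure.ae_ne volume 0] with t ht _ using (hφ t ht).symm
  have hcont : ContinuousOn φ (Iio 1) := by
    refine (continuousOn_dslope (Iio_mem_nhds one_pos)).2 ⟨?_, ?_⟩
    · exact ContinuousOn.log (by fun_prop) fun s hs => (sub_pos.2 hs).ne'
    · exact ((hasDerivAt_id 0).const_sub 1).log (by norm_num) |>.differentiableAt
  have hsub : uIcc 0 z ⊆ Iio 1 := fun s hs => hs.2.trans_lt (max_lt one_pos hz1)
  rw [hdilog, ← hφ z hz0]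
  exact (intervalIntegral.integral_hasDerivAt_right ((hcont.mono hsub).intervalIntegrable)
    (hcont.stronglyMeasurableAtFilter isOpen_Iio z hz1)
    (hcont.continuousAt (Iio_mem_nhds hz1))).neg

section
variable {q α β : ℝ}

lemma rpow_natCast_add_one_mul (hq : 0 < q) (x : ℝ) (k : ℕ) :
    q ^ (((k : ℝ) + 1) * x) = (q ^ x) ^ (k + 1) := by
  rw [mul_comm, rpow_mul hq.le, ← rpow_natCast]
  push_cast
  rfl

lemma one_sub_pow_succ_pos (hq0 : 0 ≤ q) (hq1 : q < 1) (k : ℕ) : 0 < 1 - q ^ (k + 1) :=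
  sub_pos.2 (pow_lt_one₀ hq0 hq1 k.succ_ne_zero)

lemma abs_rpow_lt_one (hq0 : 0 < q) (hq1 : q < 1) {t : ℝ} (ht : 0 < t) : |q ^ t| < 1 := by
  rw [abs_of_pos (rpow_pos_of_pos hq0 t)]
  exact rpow_lt_one hq0.le hq1 ht

lemma summable_succ_mul_rpow_div (hq0 : 0 < q) (hq1 : q < 1) {t : ℝ} (ht : 0 < t) :
    Summable fun k : ℕ => ((k : ℝ) + 1) * q ^ (((k : ℝ) + 1) * t) / (1 - q ^ (k + 1)) := by
  refine Summable.of_nonneg_of_le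
    (fun k => div_nonneg (by positivity) (one_sub_pow_succ_pos hq0.le hq1 k).le) (fun k => ?_)
    ((hasSum_succ_mul_pow_succ_of_abs_lt_one (abs_rpow_lt_one hq0 hq1 ht)).summable.div_const
      (1 - q))
  rw [rpow_natCast_add_one_mul hq0]
  gcongr
  exact pow_le_of_le_one hq0.le hq1.le k.succ_ne_zero

lemma summable_rpow_div (hq0 : 0 < q) (hq1 : q < 1) {t : ℝ} (ht : 0 < t) :
    Summable fun k : ℕ => q ^ (((k : ℝ) + 1) * t) / (1 - q ^ (k + 1)) := by
  have hden := one_sub_pow_succ_pos hq0.le hq1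
  refine Summable.of_nonneg_of_le (fun k => div_nonneg (by positivity) (hden k).le)
    (fun k => ?_) (summable_succ_mul_rpow_div hq0 hq1 ht)
  rw [mul_div_assoc]
  exact le_mul_of_one_le_left (div_nonneg (by positivity) (hden k).le) (by simp)

lemma hasDerivAt_qDigamma (hq0 : 0 < q) (hq1 : q < 1) {x : ℝ} (hx : 0 < x) :
    HasDerivAt (qDigamma q)
      (log q ^ 2 * ∑' k : ℕ, ((k : ℝ) + 1) * q ^ (((k : ℝ) + 1) * x) / (1 - q ^ (k + 1)))
      x := by
  have hg (k : ℕ) (t : ℝ) : HasDerivAt (fun t => q ^ (((k : ℝ) + 1) * t) / (1 - q ^ (k + 1)))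
      (log q * (((k : ℝ) + 1) * q ^ (((k : ℝ) + 1) * t) / (1 - q ^ (k + 1)))) t :=
    ((((hasDerivAt_id' t).const_mul ((k : ℝ) + 1)).const_rpow hq0).div_const
      (1 - q ^ (k + 1))).congr_deriv (by ring)
  have hbound (k : ℕ) (y : ℝ) (hy : y ∈ Ioi (x / 2)) :
      ‖log q * (((k : ℝ) + 1) * q ^ (((k : ℝ) + 1) * y) / (1 - q ^ (k + 1)))‖ ≤
        |log q| * (((k : ℝ) + 1) * q ^ (((k : ℝ) + 1) * (x / 2)) / (1 - q ^ (k + 1))) := by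
    have hden := one_sub_pow_succ_pos hq0.le hq1 k
    rw [norm_mul, norm_of_nonneg (div_nonneg (by positivity) hden.le), norm_eq_abs]
    gcongr |log q| * (_ * ?_ / _)
    exact rpow_le_rpow_of_exponent_ge hq0 hq1.le (by gcongr; exact le_of_lt hy)
  have hseries := hasDerivAt_tsum_of_isPreconnected
    ((summable_succ_mul_rpow_div hq0 hq1 (half_pos hx)).mul_left |log q|) isOpen_Ioi
    isPreconnected_Ioi (fun k y _ => hg k y) hbound (half_lt_self hx)
    (summable_rpow_div hq0 hq1 hx) (half_lt_self hx)
  have h := (hseries.const_mul (log q)).const_add (-log (1 - q))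
  rw [tsum_mul_left] at h
  exact h.congr_deriv (by ring)

lemma summable_rpow_natCast_add (hq0 : 0 < q) (hq1 : q < 1) (c : ℝ) :
    Summable fun j : ℕ => q ^ ((j : ℝ) + c) :=
  ((summable_geometric_of_lt_one hq0.le hq1).mul_right (q ^ c)).congr fun j => by
    rw [rpow_add hq0, rpow_natCast]

lemma summable_log_one_sub_rpow_natCast_add (hq0 : 0 < q) (hq1 : q < 1) (c : ℝ) :
    Summable fun j : ℕ => log (1 - q ^ ((j : ℝ) + c)) := by
  simpa [sub_eq_add_neg] using
    Real.summable_log_one_add_of_summable (summable_rpow_natCast_add hq0 hq1 c).neg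

lemma summable_log_qGamma_factor (hq0 : 0 < q) (hq1 : q < 1) (t : ℝ) :
    Summable fun j : ℕ => log (1 - q ^ (j + 1)) - log (1 - q ^ ((j : ℝ) + t)) := by
  refine ((summable_log_one_sub_rpow_natCast_add hq0 hq1 1).sub
    (summable_log_one_sub_rpow_natCast_add hq0 hq1 t)).congr fun j => ?_
  rw [← rpow_natCast]
  push_cast
  rfl

lemma qGamma_eq_rpow_mul_exp (hq0 : 0 < q) (hq1 : q < 1) {t : ℝ} (ht : 0 < t) :
    qGamma q t = (1 - q) ^ (1 - t) *
      exp (∑' j : ℕ, (log (1 - q ^ (j + 1)) - log (1 - q ^ ((j : ℝ) + t)))) := by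
  have hnum (j : ℕ) : 0 < 1 - q ^ (j + 1) := one_sub_pow_succ_pos hq0.le hq1 j
  have hden (j : ℕ) : 0 < 1 - q ^ ((j : ℝ) + t) :=
    sub_pos.2 (rpow_lt_one hq0.le hq1 (by positivity))
  have hlog (j : ℕ) : log ((1 - q ^ (j + 1)) / (1 - q ^ ((j : ℝ) + t))) =
      log (1 - q ^ (j + 1)) - log (1 - q ^ ((j : ℝ) + t)) :=
    log_div (hnum j).ne' (hden j).ne'
  rw [qGamma, ← tsum_congr hlog, rexp_tsum_eq_tprod (fun j => div_pos (hnum j) (hden j))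
    ((summable_log_qGamma_factor hq0 hq1 t).congr fun j => (hlog j).symm)]

lemma qGamma_pos (hq0 : 0 < q) (hq1 : q < 1) {t : ℝ} (ht : 0 < t) : 0 < qGamma q t := by
  have := sub_pos.2 hq1
  rw [qGamma_eq_rpow_mul_exp hq0 hq1 ht]
  positivity

lemma log_qGamma (hq0 : 0 < q) (hq1 : q < 1) {t : ℝ} (ht : 0 < t) :
    log (qGamma q t) = (1 - t) * log (1 - q)
      + ∑' j : ℕ, (log (1 - q ^ (j + 1)) - log (1 - q ^ ((j : ℝ) + t))) := by
  have h1q := sub_pos.2 hq1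
  rw [qGamma_eq_rpow_mul_exp hq0 hq1 ht, log_mul (by positivity) (exp_pos _).ne', log_rpow h1q,
    log_exp]

lemma hasDerivAt_tsum_log_qGamma_factor (hq0 : 0 < q) (hq1 : q < 1) {x : ℝ} (hx : 0 < x) :
    HasDerivAt (fun t => ∑' j : ℕ, (log (1 - q ^ (j + 1)) - log (1 - q ^ ((j : ℝ) + t))))
      (∑' j : ℕ, log q * (q ^ ((j : ℝ) + x) / (1 - q ^ ((j : ℝ) + x)))) x := by
  have hden (j : ℕ) {t : ℝ} (ht : 0 < t) : 0 < 1 - q ^ ((j : ℝ) + t) :=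
    sub_pos.2 (rpow_lt_one hq0.le hq1 (by positivity))
  have hg (j : ℕ) (t : ℝ) (ht : t ∈ Ioi (x / 2)) :
      HasDerivAt (fun t => log (1 - q ^ (j + 1)) - log (1 - q ^ ((j : ℝ) + t)))
        (log q * (q ^ ((j : ℝ) + t) / (1 - q ^ ((j : ℝ) + t)))) t :=
    (((((hasDerivAt_id' t).const_add (j : ℝ)).const_rpow hq0).const_sub 1).log
      (hden j ((half_pos hx).trans ht)).ne' |>.const_sub _).congr_deriv (by ring)
  have hbound (j : ℕ) (t : ℝ) (ht : t ∈ Ioi (x / 2)) :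
      ‖log q * (q ^ ((j : ℝ) + t) / (1 - q ^ ((j : ℝ) + t)))‖ ≤
        |log q| * (q ^ ((j : ℝ) + x / 2) / (1 - q ^ (x / 2))) := by
    have hj : (0 : ℝ) ≤ j := j.cast_nonneg
    have ht' : x / 2 < t := ht
    have hden' := hden j ((half_pos hx).trans ht)
    rw [norm_mul, norm_of_nonneg (div_nonneg (by positivity) hden'.le), norm_eq_abs]
    refine mul_le_mul_of_nonneg_left (div_le_div₀ (by positivity) ?_ ?_ ?_) (abs_nonneg _)
    · exact rpow_le_rpow_of_exponent_ge hq0 hq1.le (by linarith)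
    · simpa using hden 0 (half_pos hx)
    · exact sub_le_sub_left (rpow_le_rpow_of_exponent_ge hq0 hq1.le (by linarith)) 1
  exact hasDerivAt_tsum_of_isPreconnected
    ((summable_rpow_natCast_add hq0 hq1 (x / 2)).div_const _ |>.mul_left |log q|) isOpen_Ioi
    isPreconnected_Ioi hg hbound (half_lt_self hx) (summable_log_qGamma_factor hq0 hq1 x)
    (half_lt_self hx)

/-- Both sides are `∑ j, ∑ k, q ^ ((j + x) * (k + 1))`, summed in the two possible orders. -/
lemma tsum_rpow_natCast_add_div_eq (hq0 : 0 < q) (hq1 : q < 1) {x : ℝ} (hx : 0 < x) :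
    ∑' j : ℕ, q ^ ((j : ℝ) + x) / (1 - q ^ ((j : ℝ) + x)) =
      ∑' k : ℕ, q ^ (((k : ℝ) + 1) * x) / (1 - q ^ (k + 1)) := by
  have hrow (j : ℕ) : HasSum (fun k : ℕ => (q ^ ((j : ℝ) + x)) ^ (k + 1))
      (q ^ ((j : ℝ) + x) / (1 - q ^ ((j : ℝ) + x))) :=
    hasSum_pow_succ_of_abs_lt_one (abs_rpow_lt_one hq0 hq1 (by positivity))
  have hcol (k : ℕ) : HasSum (fun j : ℕ => (q ^ ((j : ℝ) + x)) ^ (k + 1))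
      (q ^ (((k : ℝ) + 1) * x) / (1 - q ^ (k + 1))) := by
    refine ((hasSum_geometric_of_lt_one (by positivity)
      (pow_lt_one₀ hq0.le hq1 k.succ_ne_zero)).mul_left (q ^ (((k : ℝ) + 1) * x))).congr_fun
      fun j => ?_
    rw [← pow_mul, ← rpow_natCast (q ^ _), ← rpow_mul hq0.le, ← rpow_natCast q,
      ← rpow_add hq0]
    push_cast
    ring_nf
  have hsum : Summable (Function.uncurry fun (k j : ℕ) => (q ^ ((j : ℝ) + x)) ^ (k + 1)) :=
    (summable_prod_of_nonneg fun _ => pow_nonneg (rpow_nonneg hq0.le _) _).2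
      ⟨fun k => (hcol k).summable,
        (summable_rpow_div hq0 hq1 hx).congr fun k => (hcol k).tsum_eq.symm⟩
  calc ∑' j : ℕ, q ^ ((j : ℝ) + x) / (1 - q ^ ((j : ℝ) + x))
      = ∑' (j : ℕ) (k : ℕ), (q ^ ((j : ℝ) + x)) ^ (k + 1) :=
        tsum_congr fun j => (hrow j).tsum_eq.symm
    _ = ∑' (k : ℕ) (j : ℕ), (q ^ ((j : ℝ) + x)) ^ (k + 1) := hsum.tsum_comm
    _ = _ := tsum_congr fun k => (hcol k).tsum_eq

lemma hasDerivAt_log_qGamma (hq0 : 0 < q) (hq1 : q < 1) {x : ℝ} (hx : 0 < x) :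
    HasDerivAt (fun t => log (qGamma q t)) (qDigamma q x) x := by
  have h := (((hasDerivAt_id' x).const_sub 1).mul_const (log (1 - q))).add
    (hasDerivAt_tsum_log_qGamma_factor hq0 hq1 hx)
  rw [tsum_mul_left, tsum_rpow_natCast_add_div_eq hq0 hq1 hx] at h
  refine (h.congr_deriv (by rw [qDigamma]; ring)).congr_of_eventuallyEq ?_
  filter_upwards [Ioi_mem_nhds hx] with t ht using log_qGamma hq0 hq1 ht

lemma hasDerivAt_neg_dilog_one_sub_rpow_div_log (hq0 : 0 < q) (hq1 : q < 1) {x : ℝ}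
    (hx : 0 < x) :
    HasDerivAt (fun u => -dilog (1 - q ^ u) / log q) (-(x * log q * q ^ x / (1 - q ^ x))) x := by
  have hqx0 := rpow_pos_of_pos hq0 x
  have hqx1 : 1 - q ^ x ≠ 0 := (sub_pos.2 (rpow_lt_one hq0.le hq1 hx)).ne'
  have h := (hasDerivAt_dilog hqx1 (by linarith)).comp x
    (((hasDerivAt_id' x).const_rpow hq0).const_sub 1)
  refine (h.neg.div_const (log q)).congr_deriv ?_
  rw [sub_sub_cancel, log_rpow hq0]
  field_simp [(log_neg hq0 hq1).ne]

lemma hasDerivAt_log_one_sub_rpow_div (hq0 : 0 < q) (hq1 : q < 1) {x : ℝ} (hx : 0 < x) :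
    HasDerivAt (fun u => log ((1 - q ^ u) / (1 - q))) (-(log q * q ^ x / (1 - q ^ x))) x := by
  have hqx1 := sub_pos.2 (rpow_lt_one hq0.le hq1 hx)
  have h1q := sub_pos.2 hq1
  refine (((((hasDerivAt_id' x).const_rpow hq0).const_sub 1).div_const (1 - q)).log
    (by positivity)).congr_deriv ?_
  field_simp

lemma log_qf (hq0 : 0 < q) (hq1 : q < 1) {u : ℝ} (hu : 0 < u) (huβ : 0 < u + β) :
    log (qf α β q u) = log (qGamma q (u + β)) + -dilog (1 - q ^ u) / log q
      - (u + β - α) * log ((1 - q ^ u) / (1 - q)) := by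
  have hΓ := qGamma_pos hq0 hq1 huβ
  have hbase : 0 < (1 - q ^ u) / (1 - q) :=
    div_pos (sub_pos.2 (rpow_lt_one hq0.le hq1 hu)) (sub_pos.2 hq1)
  rw [qf, log_div (by positivity) (by positivity), log_mul hΓ.ne' (exp_pos _).ne', log_exp,
    log_rpow hbase]

lemma hasDerivAt_log_qf (hq0 : 0 < q) (hq1 : q < 1) {x : ℝ} (hx : 0 < x) (hxβ : 0 < x + β) :
    HasDerivAt (fun u => log (qf α β q u))
      (qDigamma q (x + β) - log ((1 - q ^ x) / (1 - q))
        + (β - α) * log q * q ^ x / (1 - q ^ x)) x := by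
  have h := (((hasDerivAt_log_qGamma hq0 hq1 hxβ).comp_add_const x β).add
    (hasDerivAt_neg_dilog_one_sub_rpow_div_log hq0 hq1 hx)).sub
    ((((hasDerivAt_id' x).add_const β).sub_const α).mul
      (hasDerivAt_log_one_sub_rpow_div hq0 hq1 hx))
  have hqx1 : 1 - q ^ x ≠ 0 := (sub_pos.2 (rpow_lt_one hq0.le hq1 hx)).ne'
  refine (h.congr_deriv (by field_simp; ring)).congr_of_eventuallyEq ?_
  filter_upwards [Ioi_mem_nhds hx, Ioi_mem_nhds (neg_lt_iff_pos_add.2 hxβ)] with u hu huβ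
  exact log_qf hq0 hq1 hu (neg_lt_iff_pos_add.1 huβ)

lemma hasDerivAt_deriv_log_qf (hq0 : 0 < q) (hq1 : q < 1) {x : ℝ} (hx : 0 < x)
    (hxβ : 0 < x + β) :
    HasDerivAt (deriv fun u => log (qf α β q u))
      (deriv (qDigamma q) (x + β) + (β - α) * log q ^ 2 * q ^ x / (1 - q ^ x) ^ 2
        + log q * q ^ x / (1 - q ^ x)) x := by
  have hψ := (hasDerivAt_qDigamma hq0 hq1 hxβ).differentiableAt.hasDerivAt
  have hqx := (hasDerivAt_id' x).const_rpow hq0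
  have hqx1 : 1 - q ^ x ≠ 0 := (sub_pos.2 (rpow_lt_one hq0.le hq1 hx)).ne'
  have h := ((hψ.comp_add_const x β).sub (hasDerivAt_log_one_sub_rpow_div hq0 hq1 hx)).add
    ((hqx.div (hqx.const_sub 1) hqx1).const_mul ((β - α) * log q))
  refine (h.congr_deriv (by field_simp; ring)).congr_of_eventuallyEq ?_
  filter_upwards [Ioi_mem_nhds hx, Ioi_mem_nhds (neg_lt_iff_pos_add.2 hxβ)] with u hu huβ
  rw [(hasDerivAt_log_qf hq0 hq1 hu (neg_lt_iff_pos_add.1 huβ)).deriv]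
  simp only [Pi.add_apply, Pi.sub_apply, Pi.div_apply]
  ring

lemma rpow_div_one_sub_mul_Phi {y : ℝ} (hy0 : 0 < y) (hy1 : y ≠ 1) (x : ℝ) :
    y ^ x / (1 - y) * Phi α β y
      = log y * y ^ (x + β) / (1 - y) + (β - α) * log y * y ^ x + y ^ x := by
  have : 1 - y ≠ 0 := sub_ne_zero.2 hy1.symm
  rw [Phi, rpow_add hy0]
  field_simp

lemma hasSum_log_mul_rpow_div_mul_Phi (hq0 : 0 < q) (hq1 : q < 1) {x : ℝ} (hx : 0 < x)
    (hxβ : 0 < x + β) :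
    HasSum
      (fun k : ℕ =>
        log q * q ^ (((k : ℝ) + 1) * x) / (1 - q ^ (k + 1)) * Phi α β (q ^ (k + 1)))
      (deriv (qDigamma q) (x + β) + (β - α) * log q ^ 2 * q ^ x / (1 - q ^ x) ^ 2
        + log q * q ^ x / (1 - q ^ x)) := by
  have hqx := abs_rpow_lt_one hq0 hq1 hx
  have h := (((summable_succ_mul_rpow_div hq0 hq1 hxβ).hasSum.mul_left (log q ^ 2)).add
    ((hasSum_succ_mul_pow_succ_of_abs_lt_one hqx).mul_left ((β - α) * log q ^ 2))).add
    ((hasSum_pow_succ_of_abs_lt_one hqx).mul_left (log q))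
  have hterm (k : ℕ) :
      log q * q ^ (((k : ℝ) + 1) * x) / (1 - q ^ (k + 1)) * Phi α β (q ^ (k + 1))
        = log q ^ 2 * (((k : ℝ) + 1) * q ^ (((k : ℝ) + 1) * (x + β)) / (1 - q ^ (k + 1)))
          + (β - α) * log q ^ 2 * (((k : ℝ) + 1) * (q ^ x) ^ (k + 1))
          + log q * (q ^ x) ^ (k + 1) := by
    have hpow (s : ℝ) : q ^ (((k : ℝ) + 1) * s) = (q ^ (k + 1)) ^ s := by
      rw [← rpow_natCast, ← rpow_mul hq0.le]
      push_cast
      rfl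
    rw [mul_div_assoc, mul_assoc, hpow, rpow_div_one_sub_mul_Phi (by positivity)
      (pow_lt_one₀ hq0.le hq1 k.succ_ne_zero).ne, ← rpow_natCast_add_one_mul hq0, hpow, hpow,
      log_pow, Nat.cast_add_one]
    generalize q ^ (k + 1) = y
    ring
  rw [(hasDerivAt_qDigamma hq0 hq1 hxβ).deriv, mul_div_assoc _ (q ^ x), mul_div_assoc (log q)]
  exact h.congr_fun hterm

end

theorem iteratedDeriv_two_log_qf_general (q α β : ℝ) (hq0 : 0 < q) (hq1 : q < 1)
    (hβ : 1 ≤ β) (x : ℝ) (hx : 0 < x) :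
    iteratedDeriv 2 (fun t => Real.log (qf α β q t)) x
        = deriv (qDigamma q) (x + β)
          + (β - α) * (Real.log q) ^ 2 * q ^ x / (1 - q ^ x) ^ 2
          + Real.log q * q ^ x / (1 - q ^ x) ∧
      Summable (fun k : ℕ =>
        Real.log q * q ^ (((k : ℝ) + 1) * x) / (1 - q ^ (k + 1)) * Phi α β (q ^ (k + 1))) ∧
      iteratedDeriv 2 (fun t => Real.log (qf α β q t)) x
        = ∑' k : ℕ,
            Real.log q * q ^ (((k : ℝ) + 1) * x) / (1 - q ^ (k + 1)) * Phi α β (q ^ (k + 1)) := by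
  have hxβ : 0 < x + β := by linarith
  have hsecond : iteratedDeriv 2 (fun t => log (qf α β q t)) x
      = deriv (qDigamma q) (x + β) + (β - α) * log q ^ 2 * q ^ x / (1 - q ^ x) ^ 2
        + log q * q ^ x / (1 - q ^ x) := by
    rw [iteratedDeriv_succ, iteratedDeriv_one]
    exact (hasDerivAt_deriv_log_qf hq0 hq1 hx hxβ).deriv
  have hseries := hasSum_log_mul_rpow_div_mul_Phi (α := α) hq0 hq1 hx hxβ
  exact ⟨hsecond, hseries.summable, hsecond.trans hseries.tsum_eq.symm⟩

/-- For `0 < q < 1` and `2α ≤ 1 ≤ β`, the second derivative of `log f_{α,β}(·;q)` at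
any `x > 0` equals `ψ_q'(x+β) + (β−α)(log q)² q^x/(1−q^x)² + (log q) q^x/(1−q^x)`,
which in turn equals `Σ_{k=1}^∞ (log q)·q^{kx}/(1−q^k) · Φ_{α,β}(q^k)`, the series
being convergent. -/
theorem iteratedDeriv_two_log_qf (q α β : ℝ) (hq0 : 0 < q) (hq1 : q < 1)
    (hα : 2 * α ≤ 1) (hβ : 1 ≤ β) (x : ℝ) (hx : 0 < x) :
    iteratedDeriv 2 (fun t => Real.log (qf α β q t)) x
        = deriv (qDigamma q) (x + β)
          + (β - α) * (Real.log q) ^ 2 * q ^ x / (1 - q ^ x) ^ 2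
          + Real.log q * q ^ x / (1 - q ^ x) ∧
      Summable (fun k : ℕ =>
        Real.log q * q ^ (((k : ℝ) + 1) * x) / (1 - q ^ (k + 1)) * Phi α β (q ^ (k + 1))) ∧
      iteratedDeriv 2 (fun t => Real.log (qf α β q t)) x
        = ∑' k : ℕ,
            Real.log q * q ^ (((k : ℝ) + 1) * x) / (1 - q ^ (k + 1)) * Phi α β (q ^ (k + 1)) :=
  iteratedDeriv_two_log_qf_general q α β hq0 hq1 hβ x hx
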